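/- Let n ≥ 1, let 0 ≤ r ≤ n, and let x_1, …, x_n be pairwise distinct complex numbers. Let Σ be the n×n matrix with (l,j)-entry σ_{l,n−j} (1 ≤ l, j ≤ n), let X = diag(x_1,…,x_n) and T = diag(τ_1^{−1},…,τ_n^{−1}), and let σ_d denote the elementary symmetric polynomial of degree d in all of x_1, …, x_n, with the convention σ_d = 0 for d < 0 or d > n. Then for all 1 ≤ k, j ≤ n, the (k,j)-entry of the matrix Σᵀ · X^r · T · Σ equals (−1)^{n−r}·σ_{n+r−k−j+1} if k ≤ r and j ≤ r, equals (−1)^{n−r+1}·σ_{n+r−k−j+1} if k ≥ r+1 and j ≥ r+1, and equals 0 otherwise. -/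

import Mathlib

/-!
Write `p = ∏ᵢ (X - xᵢ)`, let `E` be the matrix of coefficients of `pₗ = p / (X - xₗ)` (so `S` is
`E` with its columns multiplied by signs) and `V = (xₗ ^ m)` the Vandermonde matrix. Evaluating
`pₗ` at the nodes gives `E Vᵀ = diag(τ)`. Synthetic division of `p` by `X - xₗ`, together with
`p(xₗ) = 0`, shows `V H = Xʳ E` for the block Hankel matrix `H` built from the coefficients of `p`.
Hence `V (Eᵀ Xʳ T E) = diag(τ) Xʳ T E = Xʳ E = V H`, and `V` is invertible since the `xₗ` are
distinct, so `Eᵀ Xʳ T E = H`; the signs and the coefficients of `p` (Vieta) then give `σ`.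
-/

open Finset Polynomial Matrix

theorem Finset.sum_range_ite_mem_Ico {M : Type*} [AddCommMonoid M] {n a b : ℕ} (hb : b ≤ n)
    (f : ℕ → M) :
    ∑ k ∈ range n, (if k ∈ Ico a b then f k else 0) = ∑ s ∈ range (b - a), f (a + s) := by
  rw [← sum_filter, ← sum_Ico_eq_sum_range]
  congr 1
  ext k
  simp only [mem_filter, mem_range, mem_Ico]
  omega

namespace Polynomial

variable {R : Type*} [CommRing R]

lemma coeff_divByMonic_X_sub_C_eq_sum_range (p : R[X]) (a : R) {j m : ℕ}
    (h : p.natDegree ≤ j + m) :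
    (p /ₘ (X - C a)).coeff j = ∑ s ∈ range m, a ^ s * p.coeff (j + 1 + s) := by
  rw [coeff_divByMonic_X_sub_C]
  calc ∑ i ∈ Icc (j + 1) p.natDegree, a ^ (i - (j + 1)) * p.coeff i
      = ∑ i ∈ Ico (j + 1) (j + 1 + m), a ^ (i - (j + 1)) * p.coeff i := by
        refine sum_subset (fun i hi => ?_) (fun i hi hi' => ?_)
        · simp only [mem_Icc, mem_Ico] at hi ⊢; omega
        · simp only [mem_Icc, mem_Ico, not_and, not_le] at hi hi'
          rw [coeff_eq_zero_of_natDegree_lt (hi' hi.1), mul_zero]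
    _ = _ := by simp [sum_Ico_eq_sum_range]

/-- For `p.natDegree ≤ n` and `r ≤ n`, the coefficient of `u ^ k * v ^ j` in the polynomial
`(v ^ r * p(u) - u ^ r * p(v)) / (u - v)`. -/
def blockHankel (p : R[X]) (r k j : ℕ) : R :=
  if r ≤ k ∧ r ≤ j then p.coeff (k + j + 1 - r)
  else if k < r ∧ j < r ∧ r ≤ k + j + 1 then -p.coeff (k + j + 1 - r)
  else 0

theorem sum_pow_mul_blockHankel {p : R[X]} {a : R} (ha : p.IsRoot a) {n r : ℕ}
    (hp : p.natDegree ≤ n) (hr : r ≤ n) (j : ℕ) :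
    ∑ k ∈ range n, a ^ k * blockHankel p r k j = a ^ r * (p /ₘ (X - C a)).coeff j := by
  rcases le_or_gt r j with hj | hj
  · have hcol : ∀ k ∈ range n, a ^ k * blockHankel p r k j =
        if k ∈ Ico r n then a ^ k * p.coeff (k + j + 1 - r) else 0 := by
      intro k hk
      rw [mem_range] at hk
      by_cases hrk : r ≤ k <;> simp [blockHankel, hrk, hj, hk]
    rw [sum_congr rfl hcol, sum_range_ite_mem_Ico le_rfl,
      coeff_divByMonic_X_sub_C_eq_sum_range p a (m := n - r) (by omega), mul_sum]
    refine sum_congr rfl fun s _ => ?_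
    rw [pow_add, show r + s + j + 1 - r = j + 1 + s by omega]; ring
  · have hcol : ∀ k ∈ range n, a ^ k * blockHankel p r k j =
        if k ∈ Ico (r - (j + 1)) r then -(a ^ k * p.coeff (k + j + 1 - r)) else 0 := by
      intro k _
      by_cases hk : k ∈ Ico (r - (j + 1)) r <;> rw [mem_Ico] at hk
      · simp [blockHankel, hk, hj, show ¬ r ≤ k by omega, show r ≤ k + j + 1 by omega]
      · simp only [blockHankel, mem_Ico, hk, if_false]; split_ifs <;> first | omega | simp
    -- for `j < r` the column sum is the low-degree part of `p(a) = 0`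
    have hroot : ∑ i ∈ range (j + 1), p.coeff i * a ^ i
        + ∑ s ∈ range (n - j), p.coeff (j + 1 + s) * a ^ (j + 1 + s) = 0 := by
      rw [← sum_range_add, show j + 1 + (n - j) = n + 1 by omega,
        ← eval_eq_sum_range' (by omega)]
      exact ha
    rw [sum_congr rfl hcol, sum_range_ite_mem_Ico hr,
      coeff_divByMonic_X_sub_C_eq_sum_range p a (m := n - j) (by omega),
      show r - (r - (j + 1)) = j + 1 by omega, sum_neg_distrib]
    have hlow : ∀ s ∈ range (j + 1),
        a ^ (r - (j + 1) + s) * p.coeff (r - (j + 1) + s + j + 1 - r)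
          = a ^ (r - (j + 1)) * (p.coeff s * a ^ s) := by
      intro s _; rw [pow_add, show r - (j + 1) + s + j + 1 - r = s by omega]; ring
    have hup : a ^ r = a ^ (r - (j + 1)) * a ^ (j + 1) := by rw [← pow_add]; congr 1; omega
    have hhigh : ∀ s ∈ range (n - j), a ^ (j + 1) * (a ^ s * p.coeff (j + 1 + s))
        = p.coeff (j + 1 + s) * a ^ (j + 1 + s) := by
      intro s _; rw [pow_add]; ring
    rw [sum_congr rfl hlow, ← mul_sum, hup, mul_assoc, mul_sum (range (n - j)),
      sum_congr rfl hhigh]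
    linear_combination (-a ^ (r - (j + 1))) * hroot

end Polynomial

namespace Lagrange

variable {R ι : Type*} [CommRing R]

theorem coeff_nodal (s : Finset ι) (v : ι → R) {j : ℕ} (h : j ≤ #s) :
    (nodal s v).coeff j = (-1) ^ (#s - j) * ∑ t ∈ powersetCard (#s - j) s, ∏ i ∈ t, v i := by
  have hcard : Multiset.card (s.val.map v) = #s := Multiset.card_map _ _
  have hprod : nodal s v = ((s.val.map v).map fun t => X - C t).prod := by
    rw [Multiset.map_map]; rfl
  rw [hprod, Multiset.prod_X_sub_C_coeff _ (hcard ▸ h), hcard, Finset.esymm_map_val]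

theorem nodal_divByMonic_X_sub_C [DecidableEq ι] {s : Finset ι} (v : ι → R) {i : ι}
    (hi : i ∈ s) :
    nodal s v /ₘ (X - C (v i)) = nodal (s.erase i) v := by
  rw [nodal_eq_mul_nodal_erase hi, mul_divByMonic_cancel_left _ (monic_X_sub_C _)]

end Lagrange

open Lagrange

section

variable {R : Type*} [CommRing R] {n : ℕ}

noncomputable def nodalEraseCoeffs (x : Fin n → R) : Matrix (Fin n) (Fin n) R :=
  of fun l j => (nodal (univ.erase l) x).coeff j

theorem nodalEraseCoeffs_mul_diagonal_neg_one_pow_apply (x : Fin n → R) (l j : Fin n) :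
    (nodalEraseCoeffs x * diagonal (fun j : Fin n => (-1 : R) ^ (n - 1 - (j : ℕ)))) l j
      = ∑ t ∈ powersetCard (n - 1 - (j : ℕ)) (univ.erase l), ∏ i ∈ t, x i := by
  have hcard : #(univ.erase l) = n - 1 := by simp
  rw [mul_diagonal, nodalEraseCoeffs, of_apply, coeff_nodal _ _ (by omega), hcard,
    mul_right_comm, ← pow_add, Even.neg_one_pow ⟨_, rfl⟩, one_mul]

variable [Nontrivial R]

theorem nodalEraseCoeffs_mul_vandermonde_transpose (x : Fin n → R) :
    nodalEraseCoeffs x * (vandermonde x)ᵀ = diagonal fun l => ∏ i ∈ univ.erase l, (x l - x i) := by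
  ext l m
  have hdeg : (nodal (univ.erase l) x).natDegree < n := by
    rw [natDegree_nodal, card_erase_of_mem (mem_univ l), card_univ, Fintype.card_fin]
    exact Nat.sub_lt (Fin.pos l) one_pos
  have heval :
      (nodalEraseCoeffs x * (vandermonde x)ᵀ) l m = (nodal (univ.erase l) x).eval (x m) := by
    rw [eval_eq_sum_range' hdeg, mul_apply, ← Fin.sum_univ_eq_sum_range]
    rfl
  rw [heval, eval_nodal, diagonal_apply]
  split_ifs with hlm
  · rw [hlm]
  · exact prod_eq_zero (mem_erase.2 ⟨Ne.symm hlm, mem_univ m⟩) (sub_self _)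

theorem vandermonde_mul_blockHankel (x : Fin n → R) {r : ℕ} (hr : r ≤ n) :
    vandermonde x * of (fun k j : Fin n => blockHankel (nodal univ x) r k j)
      = diagonal x ^ r * nodalEraseCoeffs x := by
  ext l j
  rw [mul_apply, diagonal_pow, diagonal_mul, nodalEraseCoeffs, of_apply, Pi.pow_apply,
    ← nodal_divByMonic_X_sub_C x (mem_univ l),
    ← sum_pow_mul_blockHankel (eval_nodal_at_node (mem_univ l)) _ hr,
    ← Fin.sum_univ_eq_sum_range (fun k => x l ^ k * blockHankel (nodal univ x) r k j)]
  · rfl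
  · rw [natDegree_nodal, card_univ, Fintype.card_fin]

end

theorem nodalEraseCoeffs_transpose_mul_eq_blockHankel {K : Type*} [Field K] {n : ℕ}
    {x : Fin n → K} (hx : Function.Injective x) {r : ℕ} (hr : r ≤ n) :
    (nodalEraseCoeffs x)ᵀ * diagonal x ^ r *
        diagonal (fun l => (∏ i ∈ univ.erase l, (x l - x i))⁻¹) * nodalEraseCoeffs x
      = of (fun k j : Fin n => blockHankel (nodal univ x) r k j) := by
  have hV : IsUnit (vandermonde x) :=
    (isUnit_iff_isUnit_det _).2 (isUnit_iff_ne_zero.2 (det_vandermonde_ne_zero_iff.2 hx))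
  have hτ : ∀ l, ∏ i ∈ univ.erase l, (x l - x i) ≠ 0 := fun l =>
    prod_ne_zero_iff.2 fun i hi => sub_ne_zero.2 (hx.ne (mem_erase.1 hi).1.symm)
  refine hV.mul_left_cancel ?_
  rw [vandermonde_mul_blockHankel x hr]
  calc vandermonde x * ((nodalEraseCoeffs x)ᵀ * diagonal x ^ r *
        diagonal (fun l => (∏ i ∈ univ.erase l, (x l - x i))⁻¹) * nodalEraseCoeffs x)
      = (nodalEraseCoeffs x * (vandermonde x)ᵀ)ᵀ * diagonal x ^ r *
        diagonal (fun l => (∏ i ∈ univ.erase l, (x l - x i))⁻¹) * nodalEraseCoeffs x := by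
        simp only [transpose_mul, transpose_transpose, Matrix.mul_assoc]
    _ = diagonal x ^ r * nodalEraseCoeffs x := by
        rw [nodalEraseCoeffs_mul_vandermonde_transpose, diagonal_transpose, diagonal_pow,
          diagonal_mul_diagonal, diagonal_mul_diagonal]
        congr 2
        ext l
        field_simp [hτ l]

theorem neg_one_pow_mul_blockHankel_mul_neg_one_pow {R : Type*} [CommRing R] (p : R[X])
    {n r k j : ℕ} (hr : r ≤ n) (hk : k < n) (hj : j < n) (σ : ℤ → R)
    (hσ : ∀ i : ℕ, σ (n - i) = (-1) ^ (n + i) * p.coeff i)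
    (hσ' : ∀ d : ℤ, n < d → σ d = 0) :
    (-1) ^ (n - 1 - k) * blockHankel p r k j * (-1) ^ (n - 1 - j) =
      if k < r ∧ j < r then (-1) ^ (n - r) * σ (n + r - k - j - 1)
      else if r ≤ k ∧ r ≤ j then (-1) ^ (n - r + 1) * σ (n + r - k - j - 1)
      else 0 := by
  have hidx : r ≤ k + j + 1 → (n + r - k - j - 1 : ℤ) = n - ((k + j + 1 - r : ℕ) : ℤ) := by
    intro h; push_cast [h]; ring
  unfold blockHankel
  split_ifs <;> try omega
  · rw [hidx (by omega), hσ, ← mul_assoc]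
    have : ((-1) ^ (n - 1 - k) * (-1) ^ (n - 1 - j) : R) =
        (-1) ^ (n - r + 1) * (-1) ^ (n + (k + j + 1 - r)) := by
      rw [← pow_add, ← pow_add]
      exact neg_one_pow_congr (by simp only [Nat.even_iff]; omega)
    linear_combination p.coeff (k + j + 1 - r) * this
  · rw [hidx (by omega), hσ, ← mul_assoc]
    have : ((-1) ^ (n - 1 - k) * (-1) ^ (n - 1 - j) : R) =
        (-1) ^ (n - r) * (-1) ^ (n + (k + j + 1 - r)) * (-1) := by
      rw [← pow_add, ← pow_add, ← pow_succ]
      exact neg_one_pow_congr (by simp only [Nat.even_iff]; omega)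
    linear_combination -p.coeff (k + j + 1 - r) * this
  · rw [hσ' _ (by omega)]; ring
  · simp

theorem stmt_13 (n : ℕ) (r : ℕ) (hr : r ≤ n)
    (x : Fin n → ℂ) (hx : Function.Injective x)
    (S : Matrix (Fin n) (Fin n) ℂ)
    (hS : ∀ l j, S l j =
      ∑ t ∈ Finset.powersetCard (n - 1 - (j : ℕ)) (Finset.univ.erase l), ∏ i ∈ t, x i)
    (sAll : ℤ → ℂ)
    (hsAll : ∀ d : ℤ, sAll d = if 0 ≤ d then
      ∑ t ∈ Finset.powersetCard d.toNat (Finset.univ : Finset (Fin n)), ∏ i ∈ t, x i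
      else 0) :
    ∀ k j : Fin n,
      (S.transpose * (Matrix.diagonal x) ^ r *
          Matrix.diagonal (fun l => (∏ i ∈ Finset.univ.erase l, (x l - x i))⁻¹) * S) k j =
        if (k : ℕ) < r ∧ (j : ℕ) < r then
          (-1) ^ (n - r) * sAll ((n : ℤ) + (r : ℤ) - ((k : ℕ) : ℤ) - ((j : ℕ) : ℤ) - 1)
        else if r ≤ (k : ℕ) ∧ r ≤ (j : ℕ) then
          (-1) ^ (n - r + 1) * sAll ((n : ℤ) + (r : ℤ) - ((k : ℕ) : ℤ) - ((j : ℕ) : ℤ) - 1)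
        else 0 := by
  intro k j
  set d : Fin n → ℂ := fun j => (-1) ^ (n - 1 - (j : ℕ))
  have hSE : S = nodalEraseCoeffs x * diagonal d := by
    ext l m
    rw [hS, nodalEraseCoeffs_mul_diagonal_neg_one_pow_apply]
  have hsAll_coeff : ∀ i : ℕ, sAll (n - i) = (-1) ^ (n + i) * (nodal univ x).coeff i := by
    intro i
    rcases le_or_gt i n with hi | hi
    · rw [hsAll, if_pos (by omega), coeff_nodal _ _ (by simpa using hi), card_univ,
        Fintype.card_fin, ← mul_assoc, ← pow_add, show (n : ℤ) - i = (n - i : ℕ) by omega,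
        Int.toNat_natCast, (Nat.even_iff.2 (by omega) : Even (n + i + (n - i))).neg_one_pow,
        one_mul]
    · rw [hsAll, if_neg (by omega), coeff_eq_zero_of_natDegree_lt (by simpa using hi), mul_zero]
  have hsAll_gt : ∀ m : ℤ, n < m → sAll m = 0 := by
    intro m hm
    have hcard : #(univ : Finset (Fin n)) < m.toNat := by
      rw [card_univ, Fintype.card_fin]; omega
    rw [hsAll, if_pos (by omega), powersetCard_eq_empty.2 hcard, sum_empty]
  have hmain := congr(diagonal d * $(nodalEraseCoeffs_transpose_mul_eq_blockHankel hx hr) *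
    diagonal d)
  simp only [Matrix.mul_assoc] at hmain
  rw [hSE, transpose_mul, diagonal_transpose]
  simp only [Matrix.mul_assoc]
  rw [hmain, diagonal_mul, mul_diagonal, of_apply, ← mul_assoc]
  exact neg_one_pow_mul_blockHankel_mul_neg_one_pow _ hr k.2 j.2 sAll hsAll_coeff hsAll_gt
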